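/- Under the hypotheses of the previous statement ((p⁺,N₀)-divergent LMC, 1/2 < p < p⁺, abstraction by W^p), for every state s outside F ∪ Av_C(F) of level n > N₀ with P⁼(s) < 1, the deficiency 1 − h(s) of the decreasing ratio satisfies 1 − h(s) ≥ ((2p−1)/((1−p)p)) · (P⁻(s)+P⁺(s)) · (p⁺−p) > 0. -/

import Mathlib

open scoped ENNReal NNReal BigOperators
open Filter

noncomputable section

variable {S : Type*}

/-- Probability of following a finite path (list of successive states). -/
def pathProb (P : S → S → ℝ≥0∞) : List S → ℝ≥0∞
  | [] => 1
  | [_] => 1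
  | a :: b :: l => P a b * pathProb P (b :: l)

/-- `l` is a finite path starting at `s` that visits `T` for the first time
at its last element. -/
def FirstHitPath (T : Set S) (s : S) (l : List S) : Prop :=
  l.head? = some s ∧ ∃ h : l ≠ [], l.getLast h ∈ T ∧
    ∀ i : Fin l.length, (i : ℕ) + 1 < l.length → l.get i ∉ T

/-- Probability of eventually reaching `T` from `s`. -/
def reachProb (P : S → S → ℝ≥0∞) (T : Set S) (s : S) : ℝ≥0∞ :=
  ∑' l : {l : List S // FirstHitPath T s l}, pathProb P (l : List S)

/-- The avoid set: states from which `T` is unreachable. -/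
def Av (P : S → S → ℝ≥0∞) (T : Set S) : Set S := {s | reachProb P T s = 0}

/-- Probability that, starting from `s`, the chain stays outside `R`
during its first `n` steps (i.e. the hitting time of `R` is `> n`). -/
def surviveProb (P : S → S → ℝ≥0∞) (R : Set S) (s : S) (n : ℕ) : ℝ≥0∞ :=
  ∑' l : {l : List S // l.length = n + 1 ∧ l.head? = some s ∧ ∀ x ∈ l, x ∉ R},
    pathProb P (l : List S)

/-- Expected hitting time of `R` from `s`, via `E τ = ∑_{n≥0} Pr(τ > n)`. -/
def expHittingTime (P : S → S → ℝ≥0∞) (R : Set S) (s : S) : ℝ≥0∞ :=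
  ∑' n : ℕ, surviveProb P R s n

/-- Probability that `X_i ∈ A` for all `i ≥ m`, starting from `s`
(as the infimum over finite horizons). -/
def confineProb (P : S → S → ℝ≥0∞) (A : Set S) (s : S) (m : ℕ) : ℝ≥0∞ :=
  ⨅ n : ℕ, ∑' l : {l : List S // l.length = n + 1 ∧ l.head? = some s ∧
      ∀ i : Fin l.length, m ≤ (i : ℕ) → l.get i ∈ A}, pathProb P (l : List S)

/-- Expected reward collected at the first visit of `T`. -/
def expReward (P : S → S → ℝ≥0∞) (L : List S → ℝ≥0∞) (T : Set S) (s : S) : ℝ≥0∞ :=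
  ∑' l : {l : List S // FirstHitPath T s l}, L l * pathProb P (l : List S)

/-- `P` is a stochastic matrix. -/
def IsStochastic (P : S → S → ℝ≥0∞) : Prop := ∀ s, ∑' s', P s s' = 1

/-- States of the biased chain other than `s₋`. -/
abbrev SA (P : S → S → ℝ≥0∞) (F : Set S) := {s : S // s ∉ Av P F}

/-- `P'` (on `(S ∖ Av(F)) ⊎ {s₋}`, with `none = s₋`) is a biased Markov chain
of `(C, T, F)`. -/
def IsBiased (P : S → S → ℝ≥0∞) (T F : Set S)
    (P' : Option (SA P F) → Option (SA P F) → ℝ≥0∞) : Prop :=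
  IsStochastic P' ∧
  P' none none = 1 ∧
  (∀ s : SA P F, s.val ∈ T → P' (some s) (some s) = 1) ∧
  (∀ s s' : SA P F, 0 < P s.val s'.val → 0 < P' (some s) (some s'))

/-- `(C^•, F^•)` together with `α` is an abstraction of `(C, F)`. -/
def IsAbstraction (P : S → S → ℝ≥0∞) (F : Set S)
    {S' : Type*} (P' : S' → S' → ℝ≥0∞) (F' : Set S')
    (α : SA P F → S') : Prop :=
  (∀ s : SA P F, s.val ∈ F → α s ∈ F') ∧
  (∀ s : SA P F, s.val ∉ F →
    ∑' s' : SA P F, P s.val s'.val * reachProb P' F' (α s')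
      ≤ reachProb P' F' (α s))

/-- The decreasing ratio `h(s)` of an abstraction. -/
def hRatio (P : S → S → ℝ≥0∞) (F : Set S)
    {S' : Type*} (P' : S' → S' → ℝ≥0∞) (F' : Set S')
    (α : SA P F → S') (s : SA P F) : ℝ≥0∞ :=
  (∑' s' : SA P F, P s.val s'.val * reachProb P' F' (α s'))
    / reachProb P' F' (α s)

/-- The biased Markov chain constructed from an abstraction. -/
def biasedKernel (P : S → S → ℝ≥0∞) (F : Set S)
    {S' : Type*} (P' : S' → S' → ℝ≥0∞) (F' : Set S')
    (α : SA P F → S') :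
    Option (SA P F) → Option (SA P F) → ℝ≥0∞
  | none, none => 1
  | none, some _ => 0
  | some s, none => 1 - hRatio P F P' F' α s
  | some s, some s' =>
      P s.val s'.val * reachProb P' F' (α s') / reachProb P' F' (α s)

/-- The random walk `W^p` on `ℕ`: `0` absorbing, up with probability `p`,
down with probability `1 - p`. -/
def walkKernel (p : ℝ≥0∞) : ℕ → ℕ → ℝ≥0∞ := fun m n =>
  if m = 0 then (if n = 0 then 1 else 0)
  else if n = m + 1 then p
  else if n + 1 = m then 1 - p
  else 0

/-- `(C, λ)` is a layered Markov chain. -/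
def IsLMC (P : S → S → ℝ≥0∞) (lam : S → ℕ) : Prop :=
  (∀ s s', 0 < P s s' → (lam s : ℤ) ≤ (lam s' : ℤ) + 1) ∧
  (∀ n : ℕ, {s : S | lam s = n}.Finite)

/-- Total probability of increasing the level. -/
def Pup (P : S → S → ℝ≥0∞) (lam : S → ℕ) (s : S) : ℝ≥0∞ :=
  ∑' s' : {s' : S // lam s < lam s'}, P s s'

/-- Total probability of decreasing the level (by one). -/
def Pdown (P : S → S → ℝ≥0∞) (lam : S → ℕ) (s : S) : ℝ≥0∞ :=
  ∑' s' : {s' : S // lam s' + 1 = lam s}, P s s'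

/-- Total probability of keeping the same level. -/
def Peq (P : S → S → ℝ≥0∞) (lam : S → ℕ) (s : S) : ℝ≥0∞ :=
  ∑' s' : {s' : S // lam s' = lam s}, P s s'

/-- `(C, λ)` is `(p⁺, N₀)`-divergent. -/
def Divergent (P : S → S → ℝ≥0∞) (lam : S → ℕ) (pplus : ℝ≥0∞) (N₀ : ℕ) : Prop :=
  1/2 < pplus ∧ ∀ s : S, N₀ < lam s → Peq P lam s < 1 →
    pplus ≤ Pup P lam s / (Pdown P lam s + Pup P lam s)

end

/-!
From `W^p` started at `N₀ + j`, the interval `[0, N₀]` is hit with probability `κ ^ j`,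
`κ = (1 - p) / p`. Indeed `n ↦ κ ^ (n - N₀)` satisfies the first-step equations, so it dominates
the hitting probabilities (their least solution); these satisfy the same second-order recurrence,
whose only solution that starts at `1` and tends to `0` is geometric. A layered chain drops at most
one level per step and `κ ^ (· - N₀)` is nonincreasing, so `h(s) ≤ P⁻(s) / κ + P⁼(s) + P⁺(s) κ`.
Since `P⁻ + P⁼ + P⁺ = 1`, this bound equals
`1 - (2p - 1) / ((1 - p) p) · ((P⁻ + P⁺)(p⁺ - p) + P⁺ - p⁺ (P⁻ + P⁺))`,
and divergence makes `P⁺ - p⁺ (P⁻ + P⁺)` nonnegative.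
-/

open scoped Topology

namespace FirstHitPath

variable {S : Type*} {T : Set S} {s : S} {l : List S}

lemma singleton (hs : s ∈ T) : FirstHitPath T s [s] :=
  ⟨rfl, List.cons_ne_nil _ _, by simpa using hs, fun i hi => by simp at hi⟩

lemma eq_singleton (hl : FirstHitPath T s l) (hs : s ∈ T) : l = [s] := by
  obtain ⟨hhead, hne, -, hbefore⟩ := hl
  match l, hne with
  | a :: t, _ =>
    obtain rfl : a = s := by simpa using hhead
    cases t with
    | nil => rfl
    | cons b m => exact absurd hs (hbefore ⟨0, by simp⟩ (by simp))

lemma cons {b : S} (hs : s ∉ T) (h : FirstHitPath T b l) : FirstHitPath T s (s :: l) := by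
  obtain ⟨-, hne, hlast, hbefore⟩ := h
  refine ⟨rfl, List.cons_ne_nil _ _, by rwa [List.getLast_cons hne], ?_⟩
  rintro ⟨_ | j, hj⟩ hi
  · simpa using hs
  · simpa using hbefore ⟨j, by simp at hj; omega⟩ (by simpa using hi)

lemma exists_eq_cons (hs : s ∉ T) (h : FirstHitPath T s l) :
    ∃ b m, l = s :: b :: m ∧ FirstHitPath T b (b :: m) := by
  obtain ⟨hhead, hne, hlast, hbefore⟩ := h
  match l, hne with
  | a :: t, _ =>
    obtain rfl : a = s := by simpa using hhead
    cases t with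
    | nil => exact absurd (by simpa using hlast) hs
    | cons b m =>
      refine ⟨b, m, rfl, rfl, List.cons_ne_nil _ _, ?_, fun i hi => ?_⟩
      · rwa [List.getLast_cons (List.cons_ne_nil _ _)] at hlast
      · simpa using hbefore ⟨i + 1, by simpa using i.2⟩ (by simpa using hi)

lemma length_pos (h : FirstHitPath T s l) : 0 < l.length :=
  List.length_pos_iff.mpr h.2.1

end FirstHitPath

section Reach

variable {S : Type*} (P : S → S → ℝ≥0∞) {T : Set S}

lemma pathProb_cons_of_head {b s : S} {l : List S} (hl : l.head? = some b) :
    pathProb P (s :: l) = P s b * pathProb P l := by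
  cases l with
  | nil => simp at hl
  | cons c t =>
    obtain rfl : c = b := by simpa using hl
    rfl

lemma reachProb_of_mem {s : S} (hs : s ∈ T) : reachProb P T s = 1 :=
  (tsum_eq_single ⟨[s], .singleton hs⟩ fun l hl =>
    absurd (Subtype.ext (l.2.eq_singleton hs)) hl).trans rfl

lemma tsum_firstHitPath_eq_tsum_mul {s : S} (hs : s ∉ T) (w : ℕ → ℝ≥0∞) :
    ∑' l : {l : List S // FirstHitPath T s l}, w l.1.length * pathProb P l.1
      = ∑' b, P s b * ∑' l : {l : List S // FirstHitPath T b l},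
          w (l.1.length + 1) * pathProb P l.1 := by
  let e : (Σ b : S, {l : List S // FirstHitPath T b l}) ≃
      {l : List S // FirstHitPath T s l} := .ofBijective
    (fun x => ⟨s :: x.2.1, .cons hs x.2.2⟩) (by
      constructor
      · rintro ⟨b, l, hl⟩ ⟨b', l', hl'⟩ h
        obtain rfl : l = l' := by simpa using h
        obtain rfl : b = b' := Option.some.inj (hl.1.symm.trans hl'.1)
        rfl
      · rintro ⟨l, hl⟩
        obtain ⟨b, m, rfl, hbm⟩ := hl.exists_eq_cons hs
        exact ⟨⟨b, b :: m, hbm⟩, rfl⟩)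
  rw [← e.tsum_eq, ENNReal.tsum_sigma']
  refine tsum_congr fun b => ?_
  rw [← ENNReal.tsum_mul_left]
  refine tsum_congr fun l => ?_
  change w (l.1.length + 1) * pathProb P (s :: l.1) = _
  rw [pathProb_cons_of_head P l.2.1]
  ring

lemma reachProb_eq_tsum {s : S} (hs : s ∉ T) :
    reachProb P T s = ∑' b, P s b * reachProb P T b := by
  simpa [reachProb] using tsum_firstHitPath_eq_tsum_mul P hs (fun _ => 1)

lemma reachProb_le_of_superharmonic {v : S → ℝ≥0∞} (hT : ∀ s ∈ T, 1 ≤ v s)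
    (hv : ∀ s ∉ T, ∑' b, P s b * v b ≤ v s) (s : S) : reachProb P T s ≤ v s := by
  have hwithin : ∀ M s, ∑' l : {l : List S // FirstHitPath T s l},
      (if l.1.length ≤ M then 1 else 0) * pathProb P l.1 ≤ v s := by
    intro M
    induction M with
    | zero =>
      intro s
      simp [fun l : {l : List S // FirstHitPath T s l} => l.2.length_pos.ne']
    | succ M ih =>
      intro s
      by_cases hs : s ∈ T
      · calc _ ≤ reachProb P T s := ENNReal.tsum_le_tsum fun l => by
                split_ifs <;> simp
          _ ≤ v s := (reachProb_of_mem P hs).trans_le (hT s hs)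
      · rw [tsum_firstHitPath_eq_tsum_mul P hs fun n => if n ≤ M + 1 then 1 else 0]
        refine le_trans (ENNReal.tsum_le_tsum fun b => ?_) (hv s hs)
        gcongr
        simpa using ih b
  rw [reachProb, ENNReal.tsum_eq_iSup_sum]
  refine iSup_le fun F => le_trans ?_ (hwithin (F.sup fun l => l.1.length) s)
  refine le_trans (le_of_eq (Finset.sum_congr rfl fun l hl => ?_)) (ENNReal.sum_le_tsum F)
  rw [if_pos (Finset.le_sup (f := fun l => l.1.length) hl), one_mul]

end Reach

lemma tsum_walkKernel_mul (p : ℝ≥0∞) {n : ℕ} (hn : n ≠ 0) (f : ℕ → ℝ≥0∞) :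
    ∑' b, walkKernel p n b * f b = p * f (n + 1) + (1 - p) * f (n - 1) := by
  rw [tsum_eq_sum (s := {n + 1, n - 1}), Finset.sum_pair (by omega)]
  · simp [walkKernel, hn, show n - 1 + 1 = n by omega]
  · intro b hb
    simp only [Finset.mem_insert, Finset.mem_singleton, not_or] at hb
    simp [walkKernel, hn, hb.1, show b + 1 ≠ n by omega]

lemma reachProb_walkKernel_eq {p : ℝ≥0∞} {N₀ n : ℕ} (hn : N₀ < n) :
    reachProb (walkKernel p) (Set.Iic N₀) n
      = p * reachProb (walkKernel p) (Set.Iic N₀) (n + 1)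
        + (1 - p) * reachProb (walkKernel p) (Set.Iic N₀) (n - 1) := by
  rw [reachProb_eq_tsum _ (by simpa using hn), tsum_walkKernel_mul p (by omega)]

lemma mul_div_sq_add_one_sub {p : ℝ≥0∞} (hp0 : p ≠ 0) (hp1 : p ≤ 1) :
    p * ((1 - p) / p) ^ 2 + (1 - p) = (1 - p) / p := by
  have hpt : p ≠ ∞ := ne_top_of_le_ne_top ENNReal.one_ne_top hp1
  calc p * ((1 - p) / p) ^ 2 + (1 - p)
      = (1 - p) * ((1 - p) / p + p / p) := by
        rw [sq, ← mul_assoc, ENNReal.mul_div_cancel hp0 hpt, ENNReal.div_self hp0 hpt,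
          mul_add, mul_one]
    _ = (1 - p) / p := by
        rw [ENNReal.div_add_div_same, tsub_add_cancel_of_le hp1, mul_one_div]

lemma reachProb_walkKernel_le {p : ℝ≥0∞} (hp0 : p ≠ 0) (hp1 : p ≤ 1) (N₀ n : ℕ) :
    reachProb (walkKernel p) (Set.Iic N₀) n ≤ ((1 - p) / p) ^ (n - N₀) := by
  refine reachProb_le_of_superharmonic _ (v := fun m => ((1 - p) / p) ^ (m - N₀))
    (fun m hm => ?_) (fun m hm => ?_) n
  · simp [Nat.sub_eq_zero_of_le (Set.mem_Iic.mp hm)]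
  · obtain ⟨k, rfl⟩ : ∃ k, m = N₀ + k + 1 := ⟨m - N₀ - 1, by simp at hm; omega⟩
    rw [tsum_walkKernel_mul p (by omega), show N₀ + k + 1 + 1 - N₀ = k + 2 by omega,
      show N₀ + k + 1 - 1 - N₀ = k by omega, show N₀ + k + 1 - N₀ = k + 1 by omega]
    refine le_of_eq ?_
    calc _ = (p * ((1 - p) / p) ^ 2 + (1 - p)) * ((1 - p) / p) ^ k := by ring
      _ = ((1 - p) / p) ^ (k + 1) := by rw [mul_div_sq_add_one_sub hp0 hp1, pow_succ']

/-- `r b (j + 1) - (1 - r) b j` is invariant, hence `0` since `b` tends to `0`. -/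
lemma eq_pow_of_recurrence {r : ℝ} (hr : r ≠ 0) {b : ℕ → ℝ} (h0 : b 0 = 1)
    (hrec : ∀ j, b (j + 1) = r * b (j + 2) + (1 - r) * b j)
    (hlim : Tendsto b atTop (𝓝 0)) (j : ℕ) : b j = ((1 - r) / r) ^ j := by
  set e : ℕ → ℝ := fun j => r * b (j + 1) - (1 - r) * b j
  have he_const : ∀ j, e j = e 0 := fun j => by
    induction j with
    | zero => rfl
    | succ j ih => rw [← ih]; simp only [e]; linarith [hrec j]
  have he_lim : Tendsto e atTop (𝓝 0) := by
    simpa using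
      ((hlim.comp (tendsto_add_atTop_nat 1)).const_mul r).sub (hlim.const_mul (1 - r))
  have he0 : e 0 = 0 :=
    tendsto_nhds_unique (tendsto_const_nhds.congr fun j => (he_const j).symm) he_lim
  induction j with
  | zero => simp [h0]
  | succ j ih =>
    have := he_const j
    simp only [e, he0] at this
    rw [pow_succ, ← ih]
    field_simp
    linarith

lemma reachProb_walkKernel {p : ℝ≥0∞} (hp : 1 / 2 < p) (hp1 : p ≤ 1) (N₀ n : ℕ) :
    reachProb (walkKernel p) (Set.Iic N₀) n = ((1 - p) / p) ^ (n - N₀) := by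
  rcases le_or_gt n N₀ with hn | hn
  · simp [reachProb_of_mem _ (Set.mem_Iic.mpr hn), Nat.sub_eq_zero_of_le hn]
  obtain ⟨j, rfl⟩ := Nat.exists_eq_add_of_le hn.le
  rw [Nat.add_sub_cancel_left]
  have hp0 : p ≠ 0 := by rintro rfl; simp at hp
  have hpt : p ≠ ∞ := ne_top_of_le_ne_top ENNReal.one_ne_top hp1
  have hκt : (1 - p) / p ≠ ∞ := ENNReal.div_ne_top (by simp) hp0
  set μ : ℕ → ℝ≥0∞ := fun j => reachProb (walkKernel p) (Set.Iic N₀) (N₀ + j)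
  have hμ_le : ∀ j, μ j ≤ ((1 - p) / p) ^ j := fun j => by
    simpa using reachProb_walkKernel_le hp0 hp1 N₀ (N₀ + j)
  have hμt : ∀ j, μ j ≠ ∞ := fun j => ne_top_of_le_ne_top (by simp [hκt]) (hμ_le j)
  set r := p.toReal
  have hr : 1 / 2 < r := by
    simpa using (ENNReal.toReal_lt_toReal (by simp) hpt).mpr hp
  have hr1 : r ≤ 1 := by simpa using ENNReal.toReal_mono ENNReal.one_ne_top hp1
  have hκ : ((1 - p) / p).toReal = (1 - r) / r := by
    rw [ENNReal.toReal_div, ENNReal.toReal_sub_of_le hp1 ENNReal.one_ne_top,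
      ENNReal.toReal_one]
  refine (ENNReal.toReal_eq_toReal_iff' (hμt j) (by simp [hκt])).mp ?_
  rw [ENNReal.toReal_pow, hκ]
  refine eq_pow_of_recurrence (b := fun j => (μ j).toReal) (by positivity) ?_ (fun j => ?_) ?_ j
  · simp [μ, reachProb_of_mem]
  · have h : μ (j + 1) = p * μ (j + 2) + (1 - p) * μ j := by
      simpa [μ, add_assoc] using
        reachProb_walkKernel_eq (p := p) (show N₀ < N₀ + (j + 1) by omega)
    rw [h, ENNReal.toReal_add (ENNReal.mul_ne_top hpt (hμt _))
      (ENNReal.mul_ne_top (by simp) (hμt _)), ENNReal.toReal_mul, ENNReal.toReal_mul,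
      ENNReal.toReal_sub_of_le hp1 ENNReal.one_ne_top, ENNReal.toReal_one]
  · refine squeeze_zero (fun _ => ENNReal.toReal_nonneg) (fun j => ?_)
      (tendsto_pow_atTop_nhds_zero_of_lt_one (r := (1 - r) / r)
        (div_nonneg (by linarith) (by linarith)) ((div_lt_one (by linarith)).mpr (by linarith)))
    rw [← hκ, ← ENNReal.toReal_pow]
    exact ENNReal.toReal_mono (by simp [hκt]) (hμ_le j)

lemma one_lt_two_mul_of_half_lt {p : ℝ≥0∞} (hp : 1 / 2 < p) : 1 < 2 * p := by
  rw [two_mul, ← ENNReal.add_halves 1]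
  exact ENNReal.add_lt_add hp hp

namespace IsLMC

variable {S : Type*} {P : S → S → ℝ≥0∞} {lam : S → ℕ}

lemma level_le_succ (h : IsLMC P lam) {s s' : S} (hss' : P s s' ≠ 0) :
    lam s ≤ lam s' + 1 := by
  exact_mod_cast h.1 s s' (pos_iff_ne_zero.mpr hss')

lemma tsum_mul_eq (h : IsLMC P lam) (s : S) (g : S → ℝ≥0∞) :
    ∑' s', P s s' * g s'
      = ∑' s' : {s' // lam s' + 1 = lam s}, P s s' * g s'
        + ∑' s' : {s' // lam s' = lam s}, P s s' * g s'
        + ∑' s' : {s' // lam s < lam s'}, P s s' * g s' := by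
  have hsub (q : S → Prop) : ∑' s' : {s' // q s'}, P s s' * g s'
      = ∑' s', {s' | q s'}.indicator (fun s' => P s s' * g s') s' :=
    tsum_subtype {s' | q s'} fun s' => P s s' * g s'
  rw [hsub, hsub, hsub, ← ENNReal.tsum_add, ← ENNReal.tsum_add]
  refine tsum_congr fun s' => ?_
  by_cases hP : P s s' = 0
  · simp [Set.indicator, hP]
  have := h.level_le_succ hP
  simp only [Set.indicator, Set.mem_ofPred_eq]
  rcases lt_trichotomy (lam s') (lam s) with hlt | heq | hgt
  · simp [show lam s' + 1 = lam s by omega, hlt.ne, hlt.not_gt]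
  · simp [heq]
  · simp [hgt, show lam s' + 1 ≠ lam s by omega, hgt.ne']

lemma Pdown_add_Peq_add_Pup (h : IsLMC P lam) (hP : IsStochastic P) (s : S) :
    Pdown P lam s + Peq P lam s + Pup P lam s = 1 := by
  simpa [Pdown, Peq, Pup, hP s] using (h.tsum_mul_eq s 1).symm

lemma tsum_mul_le_of_antitone (h : IsLMC P lam) (s : S) {μ : ℕ → ℝ≥0∞} (hμ : Antitone μ) :
    ∑' s', P s s' * μ (lam s')
      ≤ Pdown P lam s * μ (lam s - 1) + Peq P lam s * μ (lam s)
        + Pup P lam s * μ (lam s + 1) := by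
  rw [h.tsum_mul_eq s, Pdown, Peq, Pup, ← ENNReal.tsum_mul_right, ← ENNReal.tsum_mul_right,
    ← ENNReal.tsum_mul_right]
  gcongr with s' s' s'
  · rw [show lam s' = lam s - 1 by omega]
  · rw [s'.2]
  · exact hμ s'.2

end IsLMC

section DecreasingRatio

variable {S : Type*} {P : S → S → ℝ≥0∞} {lam : S → ℕ} {F : Set S} {p : ℝ≥0∞}

lemma hRatio_walkKernel_le (hlmc : IsLMC P lam) (hp : 1 / 2 < p) (hp1 : p < 1) {N₀ : ℕ}
    (s : SA P F) (hs : N₀ < lam s.1) :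
    hRatio P F (walkKernel p) (Set.Iic N₀) (fun s => lam s.1) s
      ≤ Pdown P lam s.1 / ((1 - p) / p) + Peq P lam s.1 + Pup P lam s.1 * ((1 - p) / p) := by
  set κ := (1 - p) / p
  have hp0 : p ≠ 0 := by rintro rfl; simp at hp
  have hκ0 : κ ≠ 0 := by simp [κ, hp1.ne_top, (tsub_pos_of_lt hp1).ne']
  have hκt : κ ≠ ∞ := ENNReal.div_ne_top (by simp) hp0
  have hκ1 : κ ≤ 1 := by
    refine ENNReal.div_le_of_le_mul (tsub_le_iff_right.mpr ?_)
    simpa [two_mul] using (one_lt_two_mul_of_half_lt hp).le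
  obtain ⟨k, hk⟩ : ∃ k, lam s.1 = N₀ + k + 1 := ⟨lam s.1 - N₀ - 1, by omega⟩
  simp only [hRatio, reachProb_walkKernel hp hp1.le]
  refine ENNReal.div_le_of_le_mul ?_
  calc ∑' s' : SA P F, P s.1 s'.1 * κ ^ (lam s'.1 - N₀)
      ≤ ∑' s', P s.1 s' * κ ^ (lam s' - N₀) :=
        ENNReal.tsum_comp_le_tsum_of_injective Subtype.val_injective _
    _ ≤ Pdown P lam s.1 * κ ^ (lam s.1 - 1 - N₀) + Peq P lam s.1 * κ ^ (lam s.1 - N₀)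
          + Pup P lam s.1 * κ ^ (lam s.1 + 1 - N₀) :=
        hlmc.tsum_mul_le_of_antitone s.1 fun a b hab =>
          pow_le_pow_right_of_le_one' hκ1 (Nat.sub_le_sub_right hab N₀)
    _ = _ := by
        have hdown : Pdown P lam s.1 / κ * κ ^ (k + 1) = Pdown P lam s.1 * κ ^ k := by
          rw [pow_succ', ← mul_assoc, ENNReal.div_mul_cancel hκ0 hκt]
        rw [hk, show N₀ + k + 1 - 1 - N₀ = k by omega, show N₀ + k + 1 - N₀ = k + 1 by omega,
          show N₀ + k + 1 + 1 - N₀ = k + 2 by omega, add_mul, add_mul, hdown]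
        ring

end DecreasingRatio

lemma deficiency_le_one_sub_real {p q d e u : ℝ} (hp : 1 / 2 < p) (hp1 : p < 1)
    (hsum : d + e + u = 1) (hdiv : q * (d + u) ≤ u) :
    (2 * p - 1) / ((1 - p) * p) * (d + u) * (q - p)
      ≤ 1 - (d / ((1 - p) / p) + e + u * ((1 - p) / p)) := by
  have h1p : 0 < 1 - p := by linarith
  have hp0 : 0 < p := by linarith
  have hgap : 1 - (d / ((1 - p) / p) + e + u * ((1 - p) / p))
      - (2 * p - 1) / ((1 - p) * p) * (d + u) * (q - p)
      = (2 * p - 1) / ((1 - p) * p) * (u - q * (d + u)) := by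
    obtain rfl : e = 1 - d - u := by linarith
    field_simp
    ring
  have : 0 ≤ (2 * p - 1) / ((1 - p) * p) * (u - q * (d + u)) :=
    mul_nonneg (div_nonneg (by linarith) (by positivity)) (by linarith)
  linarith

lemma deficiency_le_one_sub {p q d e u : ℝ≥0∞} (hp : 1 / 2 < p) (hpq : p < q) (hq : q ≤ 1)
    (hsum : d + e + u = 1) (hdiv : q * (d + u) ≤ u) :
    (2 * p - 1) / ((1 - p) * p) * (d + u) * (q - p)
      ≤ 1 - (d / ((1 - p) / p) + e + u * ((1 - p) / p)) := by
  have hp1 : p < 1 := hpq.trans_le hq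
  have hp0 : p ≠ 0 := by rintro rfl; simp at hp
  have hqt : q ≠ ∞ := ne_top_of_le_ne_top ENNReal.one_ne_top hq
  have hpt : p ≠ ∞ := hp1.ne_top
  have hdt : d ≠ ∞ := by rintro rfl; simp at hsum
  have het : e ≠ ∞ := by rintro rfl; simp at hsum
  have hut : u ≠ ∞ := by rintro rfl; simp at hsum
  have h1p0 : 1 - p ≠ 0 := (tsub_pos_of_lt hp1).ne'
  have h2p : 1 ≤ 2 * p := (one_lt_two_mul_of_half_lt hp).le
  have hBt : d / ((1 - p) / p) + e + u * ((1 - p) / p) ≠ ∞ := by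
    simp [ENNReal.div_eq_top, ENNReal.mul_eq_top, *]
  have hXt : (2 * p - 1) / ((1 - p) * p) * (d + u) * (q - p) ≠ ∞ := by
    simp [ENNReal.div_eq_top, ENNReal.mul_eq_top, *]
  refine ENNReal.le_sub_of_add_le_right hBt
    ((ENNReal.toReal_le_toReal (ENNReal.add_ne_top.mpr ⟨hXt, hBt⟩) ENNReal.one_ne_top).mp ?_)
  have hsumr : d.toReal + e.toReal + u.toReal = 1 := by
    simpa [ENNReal.toReal_add, hdt, het, hut] using congrArg ENNReal.toReal hsum
  have hdivr : q.toReal * (d.toReal + u.toReal) ≤ u.toReal := by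
    simpa [ENNReal.toReal_add, hdt, het, hut] using ENNReal.toReal_mono hut hdiv
  have := deficiency_le_one_sub_real
    (by simpa using (ENNReal.toReal_lt_toReal (by simp) hpt).mpr hp)
    (by simpa using (ENNReal.toReal_lt_toReal hpt ENNReal.one_ne_top).mpr hp1) hsumr hdivr
  simp [ENNReal.toReal_add, ENNReal.toReal_sub_of_le, ENNReal.div_eq_top, ENNReal.mul_eq_top,
    hp1.le, hpq.le, *]
  linarith

lemma deficiency_pos {p q D : ℝ≥0∞} (hp : 1 / 2 < p) (hpq : p < q) (hD : D ≠ 0) :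
    0 < (2 * p - 1) / ((1 - p) * p) * D * (q - p) := by
  have hcoeff : (2 * p - 1) / ((1 - p) * p) ≠ 0 :=
    (ENNReal.div_pos (tsub_pos_of_lt (one_lt_two_mul_of_half_lt hp)).ne'
      (ENNReal.mul_ne_top (by simp) hpq.ne_top)).ne'
  exact ENNReal.mul_pos (mul_ne_zero hcoeff hD) (tsub_pos_of_lt hpq).ne'

open scoped Classical

section Thms

variable {S : Type*}

theorem stmt13_general (P : S → S → ℝ≥0∞) (hP : IsStochastic P)
    (lam : S → ℕ) (hlmc : IsLMC P lam)
    (pplus p : ℝ≥0∞) (N₀ : ℕ) (hdiv : Divergent P lam pplus N₀)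
    (hp1 : 1/2 < p) (hp2 : p < pplus) :
    ∀ s : SA P {s : S | lam s ≤ N₀}, N₀ < lam s.val → Peq P lam s.val < 1 →
      (2 * p - 1) / ((1 - p) * p) * (Pdown P lam s.val + Pup P lam s.val) *
          (pplus - p)
        ≤ 1 - hRatio P {s : S | lam s ≤ N₀} (walkKernel p) (Set.Iic N₀)
            (fun s => lam s.val) s ∧
      0 < (2 * p - 1) / ((1 - p) * p) *
            (Pdown P lam s.val + Pup P lam s.val) * (pplus - p) := by
  intro s hs hPeq
  have hsum := hlmc.Pdown_add_Peq_add_Pup hP s.1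
  have hDU : Pdown P lam s.1 + Pup P lam s.1 ≠ 0 := fun h => hPeq.ne <| by
    rwa [add_eq_zero.mp h |>.1, add_eq_zero.mp h |>.2, zero_add, add_zero] at hsum
  have hDUt : Pdown P lam s.1 + Pup P lam s.1 ≠ ∞ :=
    ne_top_of_le_ne_top ENNReal.one_ne_top ((add_le_add le_self_add le_rfl).trans_eq hsum)
  have hup : pplus * (Pdown P lam s.1 + Pup P lam s.1) ≤ Pup P lam s.1 :=
    (ENNReal.le_div_iff_mul_le (.inl hDU) (.inl hDUt)).mp (hdiv.2 s.1 hs hPeq)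
  have hple : pplus ≤ 1 := by
    rw [← ENNReal.mul_le_mul_iff_left hDU hDUt, one_mul]
    exact hup.trans le_add_self
  refine ⟨(deficiency_le_one_sub hp1 hp2 hple hsum hup).trans (tsub_le_tsub_left ?_ 1),
    deficiency_pos hp1 hp2 hDU⟩
  exact hRatio_walkKernel_le hlmc hp1 (hp2.trans_le hple) s hs

theorem stmt13 [Countable S] (P : S → S → ℝ≥0∞) (hP : IsStochastic P)
    (lam : S → ℕ) (hlmc : IsLMC P lam)
    (pplus p : ℝ≥0∞) (N₀ : ℕ) (hdiv : Divergent P lam pplus N₀)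
    (hple : pplus ≤ 1) (hp1 : 1/2 < p) (hp2 : p < pplus) :
    ∀ s : SA P {s : S | lam s ≤ N₀}, N₀ < lam s.val → Peq P lam s.val < 1 →
      (2 * p - 1) / ((1 - p) * p) * (Pdown P lam s.val + Pup P lam s.val) *
          (pplus - p)
        ≤ 1 - hRatio P {s : S | lam s ≤ N₀} (walkKernel p) (Set.Iic N₀)
            (fun s => lam s.val) s ∧
      0 < (2 * p - 1) / ((1 - p) * p) *
            (Pdown P lam s.val + Pup P lam s.val) * (pplus - p) :=
  stmt13_general P hP lam hlmc pplus p N₀ hdiv hp1 hp2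

end Thms
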